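/- For every n > 0, every irreducible polynomials f₁,…,fₙ ∈ Q̄[X,Y] that are monic of degree at least 2 in Y, and every nonzero g ∈ Q̄[X], the set V_{f₁,…,fₙ,g} = (𝓔 \ {F ∈ 𝓔 : all coefficients of f₁,…,fₙ and g lie in F}) ∪ ⋃_{x ∈ Q̄, g(x)≠0} ⋂_{i=1}^n ⋂_{y ∈ Q̄, fᵢ(x,y)=0} {F ∈ 𝓔 : x ∈ F and y ∉ F} is an open subset of the space 𝓔 of all subfields of Q̄. -/

import Mathlib

open FirstOrder Topology

noncomputable section

/-- `Q̄`, the algebraic closure of `ℚ`. -/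
abbrev Qbar : Type := AlgebraicClosure ℚ

/-- `Prop` with the discrete two-point topology. -/
def propDiscrete : TopologicalSpace Prop := ⊥

/-- The product topology on the powerset `2^Q̄`, identified with `Set Q̄ = Q̄ → Prop`,
where each factor `Prop` carries the discrete two-point topology. -/
def powersetTopology : TopologicalSpace (Set Qbar) :=
  @Pi.topologicalSpace Qbar (fun _ => Prop) (fun _ => propDiscrete)

/-- The space `𝓔` of all subfields of `Q̄`, with the subspace topology induced from `2^Q̄`
via the identification of a subfield with its underlying set of elements. -/
instance subfieldTopology : TopologicalSpace (Subfield Qbar) :=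
  powersetTopology.induced (fun F => (F : Set Qbar))

/-- The set `V_{f₁,…,fₙ,g}
  = (𝓔 \ {F : f₁,…,fₙ,g ∈ F[X,Y]})
    ∪ ⋃_{x ∈ Q̄, g(x) ≠ 0} ⋂_{i=1}^n ⋂_{y ∈ Q̄, fᵢ(x,y) = 0} {F : x ∈ F, y ∉ F}`,
where the `fᵢ ∈ Q̄[X,Y]` are viewed as polynomials in `Y` over `Q̄[X]`. -/
def V (n : ℕ) (f : Fin n → Polynomial (Polynomial Qbar)) (g : Polynomial Qbar) :
    Set (Subfield Qbar) :=
  {F | (∀ i j k, ((f i).coeff j).coeff k ∈ F) ∧ (∀ k, g.coeff k ∈ F)}ᶜ ∪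
    ⋃ (x : Qbar) (_ : Polynomial.eval x g ≠ 0),
      ⋂ (i : Fin n),
        ⋂ (y : Qbar) (_ : Polynomial.eval y ((f i).map (Polynomial.evalRingHom x)) = 0),
          {F | x ∈ F ∧ y ∉ F}

theorem isClopen_setOf_mem_subfield (a : Qbar) : IsClopen {F : Subfield Qbar | a ∈ F} := by
  let := propDiscrete
  have : DiscreteTopology Prop := ⟨rfl⟩
  let := powersetTopology
  have hclopen : IsClopen {S : Set Qbar | a ∈ S} :=
    (isClopen_discrete {p : Prop | p}).preimage (continuous_apply a)
  exact hclopen.preimage continuous_induced_dom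

theorem isOpen_setOf_mem_subfield (a : Qbar) : IsOpen {F : Subfield Qbar | a ∈ F} :=
  (isClopen_setOf_mem_subfield a).isOpen

theorem isOpen_setOf_notMem_subfield (a : Qbar) : IsOpen {F : Subfield Qbar | a ∉ F} :=
  (isClopen_setOf_mem_subfield a).compl.isOpen

theorem isClosed_setOf_mem_subfield (a : Qbar) : IsClosed {F : Subfield Qbar | a ∈ F} :=
  (isClopen_setOf_mem_subfield a).isClosed

theorem V_isOpen_general (n : ℕ) (f : Fin n → Polynomial (Polynomial Qbar))
    (hmonic : ∀ i, (f i).Monic) (g : Polynomial Qbar) :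
    IsOpen (V n f g) := by
  refine IsOpen.union ?_ (isOpen_iUnion fun x => isOpen_iUnion fun _ =>
    isOpen_iInter_of_finite fun i => ?_)
  · simp only [isOpen_compl_iff, Set.ofPred_and, Set.ofPred_forall]
    exact (isClosed_iInter fun i => isClosed_iInter fun j => isClosed_iInter fun k =>
      isClosed_setOf_mem_subfield _).inter (isClosed_iInter fun k => isClosed_setOf_mem_subfield _)
  · -- Specialising `X := x` keeps a monic `fᵢ` nonzero, so the intersection over roots `y` is finite.
    have hroots : {y : Qbar | ((f i).map (Polynomial.evalRingHom x)).eval y = 0}.Finite :=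
      Polynomial.finite_setOfPred_isRoot ((hmonic i).map _).ne_zero
    exact hroots.isOpen_biInter fun y _ =>
      (isOpen_setOf_mem_subfield x).inter (isOpen_setOf_notMem_subfield y)

/-- For every `n > 0`, irreducible `f₁,…,fₙ ∈ Q̄[X,Y]` monic of degree at least `2` in `Y`,
and nonzero `g ∈ Q̄[X]`, the set `V_{f₁,…,fₙ,g}` is open in the space `𝓔` of all
subfields of `Q̄`. -/
theorem V_isOpen (n : ℕ) (hn : 0 < n) (f : Fin n → Polynomial (Polynomial Qbar))
    (hirr : ∀ i, Irreducible (f i)) (hmonic : ∀ i, (f i).Monic)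
    (hdeg : ∀ i, 2 ≤ (f i).natDegree) (g : Polynomial Qbar) (hg : g ≠ 0) :
    IsOpen (V n f g) :=
  V_isOpen_general n f hmonic g
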